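/- arXiv:2311.04035 — 5 statements merged into one kernel-verified Lean document; each statement's English description precedes it below -/
import Mathlib

section
/- Let X be a partially observed matrix, and consider the graph G on the set of columns (rating providers) with an edge between two columns whenever there exists a row observed by both. If C is a connected component of G and O(C) is the set of rows observed by at least one column in C, then every entry of the submatrix indexed by O(C) × C is either observed or estimatable. -/
/-- `EstimUpTo Obs v i j`: entry `(i,j)` is observed or level-`u` estimatable
for some `u ≤ v`.  In particular `∃ v, EstimUpTo Obs v i j` means the entry is
observed or estimatable. -/
def EstimUpTo {I J : Type*} (Obs : I → J → Prop) : ℕ → I → J → Prop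
  | 0 => Obs
  | v + 1 => fun i j => EstimUpTo Obs v i j ∨
      (¬ Obs i j ∧ ∃ i' j', i' ≠ i ∧ j' ≠ j ∧
        EstimUpTo Obs v i' j ∧ EstimUpTo Obs v i j' ∧ EstimUpTo Obs v i' j')

/-- The column graph: nodes are columns, with an edge between two distinct
columns iff some row is observed by both. -/
def colGraph {I J : Type*} (Obs : I → J → Prop) : SimpleGraph J where
  Adj j j' := j ≠ j' ∧ ∃ i, Obs i j ∧ Obs i j'
  symm := by
    constructor
    rintro j j' ⟨h, i, h1, h2⟩
    exact ⟨h.symm, i, h2, h1⟩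
  loopless := by
    constructor
    rintro j ⟨h, -⟩
    exact h rfl

namespace EstimUpTo

variable {I J : Type*} {Obs : I → J → Prop} {i : I} {j j' : J}

theorem mono {v w : ℕ} (h : v ≤ w) (he : EstimUpTo Obs v i j) : EstimUpTo Obs w i j := by
  induction h with
  | refl => exact he
  | step _ ih => exact Or.inl ih

theorem of_obs {v : ℕ} (h : Obs i j) : EstimUpTo Obs v i j :=
  mono (Nat.zero_le v) (show EstimUpTo Obs 0 i j from h)

/-- If row `i''` observes both `j` and `j'`, then `(i, j')` is the missing corner of the
rectangle on rows `i, i''` and columns `j, j'`. -/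
theorem exists_of_adj (hadj : (colGraph Obs).Adj j j') {v : ℕ} (he : EstimUpTo Obs v i j) :
    ∃ w, EstimUpTo Obs w i j' := by
  obtain ⟨hne, i'', hj, hj'⟩ := hadj
  by_cases hobs : Obs i j'
  · exact ⟨0, hobs⟩
  have hi'' : i'' ≠ i := by
    rintro rfl
    exact hobs hj'
  exact ⟨v + 1, Or.inr ⟨hobs, i'', j, hi'', hne, of_obs hj', he, of_obs hj⟩⟩

theorem exists_of_reachable (hr : (colGraph Obs).Reachable j j')
    (he : ∃ v, EstimUpTo Obs v i j) : ∃ v, EstimUpTo Obs v i j' := by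
  obtain ⟨p⟩ := hr
  induction p with
  | nil => exact he
  | cons hadj _ ih =>
    obtain ⟨v, hv⟩ := he
    exact ih (exists_of_adj hadj hv)

end EstimUpTo

theorem stmt2_general {m n : ℕ} (Obs : Fin m → Fin n → Prop)
    (C : (colGraph Obs).ConnectedComponent)
    (OC : Set (Fin m))
    (hOC : OC = {i | ∃ j, (colGraph Obs).connectedComponentMk j = C ∧ Obs i j}) :
    ∀ i ∈ OC, ∀ j, (colGraph Obs).connectedComponentMk j = C →
      ∃ v, EstimUpTo Obs v i j := by
  rintro i hi j hj
  rw [hOC] at hi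
  obtain ⟨j₀, hj₀, hobs⟩ := hi
  have hreach : (colGraph Obs).Reachable j₀ j :=
    SimpleGraph.ConnectedComponent.exact (hj₀.trans hj.symm)
  exact EstimUpTo.exists_of_reachable hreach ⟨0, hobs⟩

/-- If `C` is a connected component of the column graph and `O(C)` is the set
of rows observed by at least one column in `C`, then every entry of the
submatrix `O(C) × C` is observed or estimatable. -/
theorem stmt2 {m n : ℕ} (Obs : Fin m → Fin n → Prop)
    (hrow : ∀ i, ∃ j, Obs i j)
    (C : (colGraph Obs).ConnectedComponent)
    (OC : Set (Fin m))
    (hOC : OC = {i | ∃ j, (colGraph Obs).connectedComponentMk j = C ∧ Obs i j}) :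
    ∀ i ∈ OC, ∀ j, (colGraph Obs).connectedComponentMk j = C →
      ∃ v, EstimUpTo Obs v i j :=
  stmt2_general Obs C OC hOC
end

section
/- A partially observed matrix X in which every row has at least one observed entry is estimatable (i.e., every entry is observed or estimatable) if and only if its column graph representation—nodes are columns, with an edge between two columns iff some row is observed by both—is connected. -/
/-! If columns `j` and `j'` share an observed row `i'`, then `(i', j)` and `(i', j')` are observed
corners, so an estimate of `(i, j')` yields one of `(i, j)`; following a path in the column
graph from an observed entry of row `i` therefore estimates the whole row. Conversely, by
induction on the level, an estimatable `(i, j)` lies in the component of every observed column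
of row `i`: the corners `(i, j')`, `(i', j')`, `(i', j)` link `j` to it through `j'` and an
observed column of row `i'`. -/

variable {I J : Type*} {Obs : I → J → Prop}

lemma EstimUpTo.mono_s3 {v w : ℕ} (h : v ≤ w) {i : I} {j : J} (he : EstimUpTo Obs v i j) :
    EstimUpTo Obs w i j := by
  induction h with
  | refl => exact he
  | step _ ih => exact Or.inl ih

lemma EstimUpTo.reachable (hrow : ∀ i, ∃ j, Obs i j) {v : ℕ} {i : I} {j j₀ : J}
    (he : EstimUpTo Obs v i j) (h₀ : Obs i j₀) : (colGraph Obs).Reachable j₀ j := by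
  induction v generalizing i j j₀ with
  | zero =>
    by_cases hj : j₀ = j
    · exact hj ▸ SimpleGraph.Reachable.refl j₀
    · exact SimpleGraph.Adj.reachable ⟨hj, i, h₀, he⟩
  | succ v ih =>
    rcases he with he | ⟨-, i', j', -, -, hi'j, hij', hi'j'⟩
    · exact ih he h₀
    · obtain ⟨j₁, h₁⟩ := hrow i'
      exact (ih hij' h₀).trans ((ih hi'j' h₁).symm.trans (ih hi'j h₁))

lemma exists_estimUpTo_of_adj {i : I} {j j' : J} (hadj : (colGraph Obs).Adj j j') {v : ℕ}
    (he : EstimUpTo Obs v i j') : ∃ w, EstimUpTo Obs w i j := by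
  obtain ⟨hne, i', hi'j, hi'j'⟩ := hadj
  by_cases hij : Obs i j
  · exact ⟨0, hij⟩
  have hi' : i' ≠ i := by
    rintro rfl
    exact hij hi'j
  exact ⟨v + 1, Or.inr ⟨hij, i', j', hi', hne.symm,
    EstimUpTo.mono_s3 v.zero_le hi'j, he, EstimUpTo.mono_s3 v.zero_le hi'j'⟩⟩

lemma exists_estimUpTo_of_reachable {i : I} {j j₀ : J} (hr : (colGraph Obs).Reachable j j₀)
    (h₀ : Obs i j₀) : ∃ v, EstimUpTo Obs v i j := by
  obtain ⟨p⟩ := hr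
  induction p with
  | nil => exact ⟨0, h₀⟩
  | cons hadj _ ih =>
    obtain ⟨v, hv⟩ := ih h₀
    exact exists_estimUpTo_of_adj hadj hv

theorem stmt3_general {m n : ℕ} (hm : 0 < m)
    (Obs : Fin m → Fin n → Prop) (hrow : ∀ i, ∃ j, Obs i j) :
    (∀ i j, ∃ v, EstimUpTo Obs v i j) ↔ (colGraph Obs).Connected := by
  constructor
  · intro hest
    obtain ⟨j₀, h₀⟩ := hrow ⟨0, hm⟩
    refine (colGraph Obs).connected_iff_exists_forall_reachable.2 ⟨j₀, fun j => ?_⟩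
    obtain ⟨v, hv⟩ := hest ⟨0, hm⟩ j
    exact hv.reachable hrow h₀
  · intro hconn i j
    obtain ⟨j₀, h₀⟩ := hrow i
    exact exists_estimUpTo_of_reachable (hconn.preconnected j j₀) h₀

/-- A partially observed matrix in which every row has at least one observed
entry is estimatable (every entry is observed or estimatable) iff its column
graph is connected. -/
theorem stmt3 {m n : ℕ} (hm : 0 < m) (hn : 0 < n)
    (Obs : Fin m → Fin n → Prop) (hrow : ∀ i, ∃ j, Obs i j) :
    (∀ i j, ∃ v, EstimUpTo Obs v i j) ↔ (colGraph Obs).Connected :=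
  stmt3_general hm Obs hrow
end

section
/- Let X be a partially observed matrix with row set I and column set J, let I_j be the set of rows observed in column j, and for each j' ∈ J let N_{j'} = { j ∈ J : I_j ∩ I_{j'} ≠ ∅ }. Then every unobserved entry of X is level-1 estimatable if and only if I = ⋃_{j ∈ N_{j'}} I_j for all j' ∈ J. -/
/-!
An unobserved entry `(i', j')` is level-1 estimatable exactly when row `i'` is observed in some
column `j''` that shares an observed row `i''` with `j'`: the side conditions `i'' ≠ i'` and
`j'' ≠ j'` hold automatically, since `(i', j')` itself is unobserved. An observed entry `(i, j')`
is covered by `j'` itself, so the union condition only has content at unobserved entries.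
-/

namespace MatrixCompletion

variable {I J : Type*} (Obs : I → J → Prop)

def LevelOneEstimatable (i' : I) (j' : J) : Prop :=
  ∃ i'' j'', i'' ≠ i' ∧ j'' ≠ j' ∧ Obs i'' j' ∧ Obs i' j'' ∧ Obs i'' j''

variable {Obs}

theorem levelOneEstimatable_iff_of_not_obs {i' : I} {j' : J} (h : ¬ Obs i' j') :
    LevelOneEstimatable Obs i' j' ↔ ∃ j'', (∃ i'', Obs i'' j'' ∧ Obs i'' j') ∧ Obs i' j'' := by
  constructor
  · rintro ⟨i'', j'', -, -, h_i''j', h_i'j'', h_i''j''⟩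
    exact ⟨j'', ⟨i'', h_i''j'', h_i''j'⟩, h_i'j''⟩
  · rintro ⟨j'', ⟨i'', h_i''j'', h_i''j'⟩, h_i'j''⟩
    exact ⟨i'', j'', fun e => h (e ▸ h_i''j'), fun e => h (e ▸ h_i'j''), h_i''j', h_i'j'', h_i''j''⟩

theorem forall_levelOneEstimatable_iff (j' : J) :
    (∀ i', ¬ Obs i' j' → LevelOneEstimatable Obs i' j') ↔
      ∀ i, ∃ j, (∃ i'', Obs i'' j ∧ Obs i'' j') ∧ Obs i j := by
  refine forall_congr' fun i => ?_
  by_cases hi : Obs i j'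
  · exact iff_of_true (fun h => absurd hi h) ⟨j', ⟨i, hi, hi⟩, hi⟩
  · simp only [hi, not_false_eq_true, forall_true_left, levelOneEstimatable_iff_of_not_obs hi]

end MatrixCompletion

open MatrixCompletion in
/-- Every unobserved entry of `X` is level-1 estimatable iff
`I = ⋃_{j ∈ N_{j'}} I_j` for all columns `j'`, where `I_j` is the set of rows
observed in column `j` and `N_{j'} = {j : I_j ∩ I_{j'} ≠ ∅}`. -/
theorem stmt4 {I J : Type*} (Obs : I → J → Prop)
    (Iset : J → Set I) (hI : ∀ j, Iset j = {i | Obs i j})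
    (N : J → Set J) (hN : ∀ j', N j' = {j | (Iset j ∩ Iset j').Nonempty}) :
    (∀ i' j', ¬ Obs i' j' → ∃ i'' j'', i'' ≠ i' ∧ j'' ≠ j' ∧
        Obs i'' j' ∧ Obs i' j'' ∧ Obs i'' j'') ↔
      (∀ j' : J, (Set.univ : Set I) = ⋃ j ∈ N j', Iset j) := by
  rw [forall_comm]
  refine forall_congr' fun j' => (forall_levelOneEstimatable_iff j').trans ?_
  rw [eq_comm, Set.eq_univ_iff_forall]
  simp only [hN, hI, Set.mem_iUnion, Set.mem_ofPred_eq, Set.Nonempty, Set.mem_inter_iff, exists_prop]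
end

section
/- Let G be the column graph of a partially observed matrix (edge between columns iff they share an observed row), and suppose G is disconnected with connected components C_1,...,C_r (r ≥ 2), each row observed by at least one column. Then the observed-row sets O(C_1),...,O(C_r) partition the set of all rows, and no entry (i,j) with i ∉ O(C) for the component C containing j is estimatable. -/
/-!
Two columns observing a common row are adjacent in the column graph, so every row's observed
columns lie in a single component: the sets `O(C)` are pairwise disjoint, and they cover all
rows since every row is observed somewhere. For estimatability, induct on the level: if the
three corners `(i',j)`, `(i,j')`, `(i',j')` lie in the component blocks `O(C) × C`, then row `i'`
belongs to the blocks of both `j` and `j'`, forcing `j` and `j'` into the same component, and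
then `(i,j')` places `i` in the block of `j`.
-/

namespace colGraph

variable {I J : Type*} {Obs : I → J → Prop}

def observedRows (Obs : I → J → Prop) (C : (colGraph Obs).ConnectedComponent) : Set I :=
  {i | ∃ j, (colGraph Obs).connectedComponentMk j = C ∧ Obs i j}

theorem connectedComponentMk_eq_of_obs {i : I} {j j' : J} (h : Obs i j) (h' : Obs i j') :
    (colGraph Obs).connectedComponentMk j = (colGraph Obs).connectedComponentMk j' := by
  by_cases hjj : j = j'
  · rw [hjj]
  · exact SimpleGraph.ConnectedComponent.sound (SimpleGraph.Adj.reachable ⟨hjj, i, h, h'⟩)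

theorem mem_observedRows_of_obs {i : I} {j : J} (h : Obs i j) :
    i ∈ observedRows Obs ((colGraph Obs).connectedComponentMk j) :=
  ⟨j, rfl, h⟩

theorem eq_of_mem_observedRows {i : I} {C C' : (colGraph Obs).ConnectedComponent}
    (h : i ∈ observedRows Obs C) (h' : i ∈ observedRows Obs C') : C = C' := by
  obtain ⟨j, rfl, hj⟩ := h
  obtain ⟨j', rfl, hj'⟩ := h'
  exact connectedComponentMk_eq_of_obs hj hj'

theorem existsUnique_mem_observedRows (hrow : ∀ i, ∃ j, Obs i j) (i : I) :
    ∃! C : (colGraph Obs).ConnectedComponent, i ∈ observedRows Obs C := by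
  obtain ⟨j, hj⟩ := hrow i
  have hmem := mem_observedRows_of_obs hj
  exact ⟨_, hmem, fun _ hC => eq_of_mem_observedRows hC hmem⟩

theorem mem_observedRows_of_estimUpTo {v : ℕ} {i : I} {j : J} (h : EstimUpTo Obs v i j) :
    i ∈ observedRows Obs ((colGraph Obs).connectedComponentMk j) := by
  induction v generalizing i j with
  | zero => exact mem_observedRows_of_obs h
  | succ v ih =>
    rcases h with h | ⟨-, i', j', -, -, hi'j, hij', hi'j'⟩
    · exact ih h
    · have hcomp : (colGraph Obs).connectedComponentMk j = (colGraph Obs).connectedComponentMk j' :=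
        eq_of_mem_observedRows (ih hi'j) (ih hi'j')
      exact hcomp ▸ ih hij'

end colGraph

theorem stmt16_general {m n : ℕ} (Obs : Fin m → Fin n → Prop)
    (hrow : ∀ i, ∃ j, Obs i j)
    (O : (colGraph Obs).ConnectedComponent → Set (Fin m))
    (hO : ∀ C, O C = {i | ∃ j, (colGraph Obs).connectedComponentMk j = C ∧ Obs i j}) :
    (∀ i : Fin m, ∃! C : (colGraph Obs).ConnectedComponent, i ∈ O C) ∧
      ∀ i j, i ∉ O ((colGraph Obs).connectedComponentMk j) →
        ¬ ∃ v, EstimUpTo Obs v i j := by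
  obtain rfl : O = colGraph.observedRows Obs := funext hO
  exact ⟨colGraph.existsUnique_mem_observedRows hrow,
    fun _ _ hnot ⟨_, hv⟩ => hnot (colGraph.mem_observedRows_of_estimUpTo hv)⟩

/-- If the column graph is disconnected and every row is observed by some
column, then the observed-row sets of the connected components partition the
set of rows, and no entry `(i,j)` with `i` outside the observed-row set of the
component of `j` is estimatable. -/
theorem stmt16 {m n : ℕ} (hn : 0 < n) (Obs : Fin m → Fin n → Prop)
    (hrow : ∀ i, ∃ j, Obs i j)
    (hdis : ¬ (colGraph Obs).Connected)
    (O : (colGraph Obs).ConnectedComponent → Set (Fin m))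
    (hO : ∀ C, O C = {i | ∃ j, (colGraph Obs).connectedComponentMk j = C ∧ Obs i j}) :
    (∀ i : Fin m, ∃! C : (colGraph Obs).ConnectedComponent, i ∈ O C) ∧
      ∀ i j, i ∉ O ((colGraph Obs).connectedComponentMk j) →
        ¬ ∃ v, EstimUpTo Obs v i j :=
  stmt16_general Obs hrow O hO
end

section
/- In the column graph of a partially observed matrix, if columns j and j' are connected by an edge (i.e., share an observed row), then the sets of estimatable-or-observed rows of j and j' coincide: E(j) = E(j'). -/
section

variable {I J : Type*} (Obs : I → J → Prop)

lemma estimUpTo_of_obs {i : I} {j : J} (h : Obs i j) : ∀ v, EstimUpTo Obs v i j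
  | 0 => h
  | v + 1 => Or.inl (estimUpTo_of_obs h v)

/-- Witnessed by the 2×2 submatrix on rows `i₀, i` and columns `j', j`, whose only
possibly missing corner is `(i, j')`. -/
lemma exists_estimUpTo_of_common_row {j j' : J} (hne : j ≠ j') {i₀ i : I}
    (h₀ : Obs i₀ j) (h₀' : Obs i₀ j') {v : ℕ} (h : EstimUpTo Obs v i j) :
    ∃ w, EstimUpTo Obs w i j' := by
  by_cases hobs : Obs i j'
  · exact ⟨0, hobs⟩
  have hi₀ : i₀ ≠ i := by
    rintro rfl
    exact hobs h₀'
  exact ⟨v + 1, Or.inr ⟨hobs, i₀, j, hi₀, hne, estimUpTo_of_obs Obs h₀' v, h,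
    estimUpTo_of_obs Obs h₀ v⟩⟩

lemma setOf_estimUpTo_subset_of_common_row {j j' : J} (hne : j ≠ j') {i₀ : I}
    (h₀ : Obs i₀ j) (h₀' : Obs i₀ j') :
    {i | ∃ v, EstimUpTo Obs v i j} ⊆ {i | ∃ v, EstimUpTo Obs v i j'} :=
  fun _ ⟨_, h⟩ => exists_estimUpTo_of_common_row Obs hne h₀ h₀' h

end

/-- If columns `j` and `j'` share an observed row (i.e., are adjacent in the
column graph), then their sets of estimatable-or-observed rows coincide:
`E(j) = E(j')`. -/
theorem stmt17 {I J : Type*} (Obs : I → J → Prop) (j j' : J) (hne : j ≠ j')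
    (hshare : ∃ i₀, Obs i₀ j ∧ Obs i₀ j') :
    {i | ∃ v, EstimUpTo Obs v i j} = {i | ∃ v, EstimUpTo Obs v i j'} := by
  obtain ⟨i₀, h₀, h₀'⟩ := hshare
  exact (setOf_estimUpTo_subset_of_common_row Obs hne h₀ h₀').antisymm
    (setOf_estimUpTo_subset_of_common_row Obs hne.symm h₀' h₀)
end
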